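/- arXiv:1212.0446 — 2 statements merged into one kernel-verified Lean document; each statement's English description precedes it below -/
import Mathlib

section
/- (Proposition 5.1 (i), local form.) Under the stated hypotheses, with Einstein summation over repeated indices, the following identities hold on U: for all 1 ≤ j, k ≤ p, α_{lj}(f(z,t)) · (∂h̄_l/∂z̄_k − ω_{ki} ∂h̄_l/∂z_i) = ω_{ki} ∂h_j/∂z_i − ∂h_j/∂z̄_k (formula (5.8)); and for all 1 ≤ j ≤ d, 1 ≤ k ≤ p, p_{lj}(f(z,t)) · (∂h̄_l/∂z̄_k − ω_{ki} ∂h̄_l/∂z_i) = n_{ki} ∂g_j/∂t_i − ∂g_j/∂z̄_k − a_k^l ∂g_j/∂t_l + ω_{ki} (∂g_j/∂z_i + conj(a_i^l) ∂g_j/∂t_l − (∂h_l/∂z_i) conj(a_l^j)(f(z,t)) − (∂h̄_l/∂z_i) a_l^j(f(z,t))) + (∂h̄_l/∂z̄_k) a_l^j(f(z,t)) + (∂h_l/∂z̄_k) conj(a_l^j)(f(z,t)) (formula (5.9)); here ω, n, the coefficients a_k^l and conj(a_i^l) multiplying derivatives of g, and all derivatives of h and g are evaluated at (z,t) ∈ U,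 while α, p, a_l^j and conj(a_l^j) are evaluated at f(z,t) ∈ U'. -/
noncomputable section
open Complex ComplexConjugate

/-- The model space `ℂ^p × ℝ^d` with foliated coordinates `(z, t)`. -/
abbrev Mdl (p d : ℕ) := (Fin p → ℂ) × (Fin d → ℝ)

/-- A complexified tangent vector, written in the frame
`∂/∂z_i, ∂/∂z̄_i, ∂/∂t_l`: the three components are the coefficients on
`∂/∂z`, on `∂/∂z̄` and on `∂/∂t` respectively. -/
abbrev CVec (p d : ℕ) := (Fin p → ℂ) × (Fin p → ℂ) × (Fin d → ℂ)

/-- A complex vector field on (an open subset of) `ℂ^p × ℝ^d`. -/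
abbrev CVF (p d : ℕ) := Mdl p d → CVec p d

variable {p d : ℕ}

/-- `∂φ/∂z_i = ½(∂φ/∂x_i − i ∂φ/∂y_i)`, via the ℂ-linear extension of the real
Fréchet derivative. -/
def pdz (i : Fin p) (φ : Mdl p d → ℂ) (u : Mdl p d) : ℂ :=
  (1/2 : ℂ) * (fderiv ℝ φ u (Pi.single i 1, 0)
    - Complex.I * fderiv ℝ φ u (Pi.single i Complex.I, 0))

/-- `∂φ/∂z̄_i = ½(∂φ/∂x_i + i ∂φ/∂y_i)`. -/
def pdzbar (i : Fin p) (φ : Mdl p d → ℂ) (u : Mdl p d) : ℂ :=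
  (1/2 : ℂ) * (fderiv ℝ φ u (Pi.single i 1, 0)
    + Complex.I * fderiv ℝ φ u (Pi.single i Complex.I, 0))

/-- `∂φ/∂t_l`. -/
def pdt (l : Fin d) (φ : Mdl p d → ℂ) (u : Mdl p d) : ℂ :=
  fderiv ℝ φ u (0, Pi.single l 1)

/-- Derivative of a scalar function `φ` at `u` along a complexified tangent
vector `v` (the ℂ-linear extension of the real Fréchet derivative of `φ` at `u`,
applied to `v`). -/
def derivVec (v : CVec p d) (φ : Mdl p d → ℂ) (u : Mdl p d) : ℂ :=
  (∑ i, v.1 i * pdz i φ u) + (∑ i, v.2.1 i * pdzbar i φ u)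
    + (∑ l, v.2.2 l * pdt l φ u)

/-- Derivative of `φ` along the complex vector field `X`: `(X·φ)(u)`. -/
def derivAlong (X : CVF p d) (φ : Mdl p d → ℂ) (u : Mdl p d) : ℂ :=
  derivVec (X u) φ u

/-- Lie bracket of complex vector fields:
`[X, Y](u) = (D_u Y)(X(u)) − (D_u X)(Y(u))`, computed componentwise in the frame
`∂/∂z_i, ∂/∂z̄_i, ∂/∂t_l`. -/
def bracket (X Y : CVF p d) : CVF p d := fun u =>
  (fun j => derivAlong X (fun v => (Y v).1 j) u - derivAlong Y (fun v => (X v).1 j) u,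
   fun j => derivAlong X (fun v => (Y v).2.1 j) u - derivAlong Y (fun v => (X v).2.1 j) u,
   fun l => derivAlong X (fun v => (Y v).2.2 l) u - derivAlong Y (fun v => (X v).2.2 l) u)

/-- The canonical frame `e_i = ∂/∂z̄_i + Σ_l a_i^l ∂/∂t_l` (formula (3.13)). -/
def eFrame (a : Fin p → Fin d → Mdl p d → ℂ) (i : Fin p) : CVF p d :=
  fun u => (0, Pi.single i 1, fun l => a i l u)

/-- The conjugate frame `ē_i = ∂/∂z_i + Σ_l conj(a_i^l) ∂/∂t_l`. -/
def eBarFrame (a : Fin p → Fin d → Mdl p d → ℂ) (i : Fin p) : CVF p d :=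
  fun u => (Pi.single i 1, 0, fun l => conj (a i l u))

/-- The coordinate vector field `∂/∂t_l`. -/
def dtField (l : Fin d) : CVF p d := fun _ => (0, 0, Pi.single l 1)

/-- A finite family of complex vector fields is involutive on `U` if the bracket
of any two members lies, at every point of `U`, in the pointwise ℂ-linear span
of the family. -/
def InvolutiveOn {ι : Type*} (F : ι → CVF p d) (U : Set (Mdl p d)) : Prop :=
  ∀ i j, ∀ u ∈ U,
    bracket (F i) (F j) u ∈ Submodule.span ℂ (Set.range fun k => F k u)

/-- The deformation at constant type coded by `ω`:
`e_i' = e_i − Σ_j ω_{ij} ē_j`. -/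
def defCT (a : Fin p → Fin d → Mdl p d → ℂ) (ω : Fin p → Fin p → Mdl p d → ℂ)
    (i : Fin p) : CVF p d :=
  fun u => eFrame a i u - ∑ j, ω i j u • eBarFrame a j u

/-- Pushforward of a complexified tangent vector `v` at `x` by a smooth map `F`
(the ℂ-linear extension of the differential of `F` at `x`), expressed in the
frame `∂/∂z_j, ∂/∂z̄_j, ∂/∂t_l` at `F x`. -/
def push (F : Mdl p d → Mdl p d) (x : Mdl p d) (v : CVec p d) : CVec p d :=
  (fun j => derivVec v (fun u => (F u).1 j) x,
   fun j => derivVec v (fun u => conj ((F u).1 j)) x,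
   fun l => derivVec v (fun u => (((F u).2 l : ℝ) : ℂ)) x)

/-- The deformed frame vector field
`e_k − Σ_i ω_{ki} ē_i − Σ_i n_{ki} ∂/∂t_i` coding a deformation at constant
polarization. -/
def defFrame (a : Fin p → Fin d → Mdl p d → ℂ)
    (ω : Fin p → Fin p → Mdl p d → ℂ) (n : Fin p → Fin d → Mdl p d → ℂ)
    (k : Fin p) : CVF p d :=
  fun u => eFrame a k u - (∑ i, ω k i u • eBarFrame a i u)
    - (∑ i, n k i u • dtField i u)


section Helpers
variable {p d : ℕ}

lemma sum_single_mul (k : Fin p) (φ : Fin p → ℂ) :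
    ∑ i, (Pi.single k 1 : Fin p → ℂ) i * φ i = φ k := by
  simp [Pi.single_apply]

/-- components of the deformed frame vector -/
lemma defFrame_fst (a : Fin p → Fin d → Mdl p d → ℂ) (ω : Fin p → Fin p → Mdl p d → ℂ)
    (n : Fin p → Fin d → Mdl p d → ℂ) (k : Fin p) (x : Mdl p d) :
    (defFrame a ω n k x).1 = fun i => -(ω k i x) := by
  funext i
  simp [defFrame, eFrame, eBarFrame, dtField, Prod.fst_sum, Prod.snd_sum,
    Finset.sum_apply, Pi.single_apply]

lemma defFrame_snd1 (a : Fin p → Fin d → Mdl p d → ℂ) (ω : Fin p → Fin p → Mdl p d → ℂ)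
    (n : Fin p → Fin d → Mdl p d → ℂ) (k : Fin p) (x : Mdl p d) :
    (defFrame a ω n k x).2.1 = (Pi.single k 1 : Fin p → ℂ) := by
  funext i
  simp [defFrame, eFrame, eBarFrame, dtField, Prod.fst_sum, Prod.snd_sum,
    Finset.sum_apply, Pi.single_apply]

lemma defFrame_snd2 (a : Fin p → Fin d → Mdl p d → ℂ) (ω : Fin p → Fin p → Mdl p d → ℂ)
    (n : Fin p → Fin d → Mdl p d → ℂ) (k : Fin p) (x : Mdl p d) :
    (defFrame a ω n k x).2.2
      = fun m => a k m x - (∑ i, ω k i x * conj (a i m x)) - n k m x := by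
  funext m
  simp [defFrame, eFrame, eBarFrame, dtField, Prod.fst_sum, Prod.snd_sum,
    Finset.sum_apply, Pi.single_apply, mul_comm]

lemma derivVec_defFrame (a : Fin p → Fin d → Mdl p d → ℂ) (ω : Fin p → Fin p → Mdl p d → ℂ)
    (n : Fin p → Fin d → Mdl p d → ℂ) (k : Fin p) (x : Mdl p d) (φ : Mdl p d → ℂ) :
    derivVec (defFrame a ω n k x) φ x
      = pdzbar k φ x - (∑ i, ω k i x * pdz i φ x)
        + ∑ m, (a k m x - (∑ i, ω k i x * conj (a i m x)) - n k m x) * pdt m φ x := by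
  rw [derivVec, defFrame_fst, defFrame_snd1, defFrame_snd2, sum_single_mul]
  simp only [neg_mul, Finset.sum_neg_distrib]
  ring

lemma comb_fst (a' : Fin p → Fin d → Mdl p d → ℂ) (α : Fin p → Fin p → Mdl p d → ℂ)
    (P : Fin p → Fin d → Mdl p d → ℂ) (c : Fin p → ℂ) (y : Mdl p d) (j : Fin p) :
    (∑ l, c l • defFrame a' α P l y).1 j = -(∑ l, c l * α l j y) := by
  simp [Prod.fst_sum, Finset.sum_apply, defFrame_fst, mul_comm]

lemma comb_snd1 (a' : Fin p → Fin d → Mdl p d → ℂ) (α : Fin p → Fin p → Mdl p d → ℂ)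
    (P : Fin p → Fin d → Mdl p d → ℂ) (c : Fin p → ℂ) (y : Mdl p d) (j : Fin p) :
    (∑ l, c l • defFrame a' α P l y).2.1 j = c j := by
  simp [Prod.fst_sum, Prod.snd_sum, Finset.sum_apply, defFrame_snd1, Pi.single_apply]

lemma comb_snd2 (a' : Fin p → Fin d → Mdl p d → ℂ) (α : Fin p → Fin p → Mdl p d → ℂ)
    (P : Fin p → Fin d → Mdl p d → ℂ) (c : Fin p → ℂ) (y : Mdl p d) (m : Fin d) :
    (∑ l, c l • defFrame a' α P l y).2.2 m
      = ∑ l, c l * (a' l m y - (∑ i, α l i y * conj (a' i m y)) - P l m y) := by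
  simp [Prod.snd_sum, Finset.sum_apply, defFrame_snd2]

end Helpers

section Helpers2
variable {p d : ℕ}

lemma pdt_fst_comp {φ : (Fin p → ℂ) → ℂ} {x : Mdl p d}
    (hφ : DifferentiableAt ℝ φ x.1) (m : Fin d) :
    pdt m (fun u : Mdl p d => φ u.1) x = 0 := by
  rw [pdt]
  have h1 : (fun u : Mdl p d => φ u.1) = φ ∘ Prod.fst := rfl
  rw [h1, fderiv_comp x hφ differentiableAt_fst]
  simp [fderiv_fst]

lemma swap_mul_sum {ι κ : Type*} [Fintype ι] [Fintype κ]
    (w : ι → ℂ) (u : κ → ι → ℂ) (v : κ → ℂ) :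
    ∑ l : κ, (∑ q : ι, w q * u l q) * v l
      = ∑ q : ι, w q * (∑ l : κ, u l q * v l) := by
  simp only [Finset.sum_mul, Finset.mul_sum]
  rw [Finset.sum_comm]
  exact Finset.sum_congr rfl fun q _ => Finset.sum_congr rfl fun l _ => by ring

lemma swap_mul_sum' {ι κ : Type*} [Fintype ι] [Fintype κ]
    (c : κ → ℂ) (α : κ → ι → ℂ) (β : ι → ℂ) :
    ∑ l : κ, c l * (∑ i : ι, α l i * β i)
      = ∑ i : ι, (∑ l : κ, c l * α l i) * β i := by
  simp only [Finset.mul_sum, Finset.sum_mul]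
  rw [Finset.sum_comm]
  exact Finset.sum_congr rfl fun q _ => Finset.sum_congr rfl fun l _ => by ring

end Helpers2
/-- Proposition 5.1 (i) of the paper, local form.
If the foliated diffeomorphism `f(z,t) = (h(z), g(z,t))` pushes the deformation at
constant polarization coded by `(ω, n)` (in the frames attached to `a` on `U`)
onto the one coded by `(α, P)` (in the frames attached to `a'` on `U'`), then
formulas (5.8) and (5.9) hold on `U`. -/
theorem statement10 (p d : ℕ) (hp : 1 ≤ p) (hd : 1 ≤ d)
    (U U' : Set (Mdl p d)) (hU : IsOpen U) (hU' : IsOpen U')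
    (a a' : Fin p → Fin d → Mdl p d → ℂ)
    (ha : ∀ i l, ContDiffOn ℝ (⊤ : ℕ∞) (a i l) U)
    (ha' : ∀ i l, ContDiffOn ℝ (⊤ : ℕ∞) (a' i l) U')
    (h : (Fin p → ℂ) → Fin p → ℂ) (g : Mdl p d → Fin d → ℝ)
    (f : Mdl p d → Mdl p d) (hf : f = fun x => (h x.1, fun l => g x l))
    -- f : U → U' is a diffeomorphism
    (hfbij : Set.BijOn f U U') (hfsmooth : ContDiffOn ℝ (⊤ : ℕ∞) f U)
    (finv : Mdl p d → Mdl p d) (hfinv : Set.InvOn finv f U U')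
    (hfinvsmooth : ContDiffOn ℝ (⊤ : ℕ∞) finv U')
    (ω : Fin p → Fin p → Mdl p d → ℂ) (n : Fin p → Fin d → Mdl p d → ℂ)
    (α : Fin p → Fin p → Mdl p d → ℂ) (P : Fin p → Fin d → Mdl p d → ℂ)
    (hω : ∀ k i, ContDiffOn ℝ (⊤ : ℕ∞) (ω k i) U)
    (hn : ∀ k i, ContDiffOn ℝ (⊤ : ℕ∞) (n k i) U)
    (hα : ∀ l j, ContDiffOn ℝ (⊤ : ℕ∞) (α l j) U')
    (hP : ∀ l j, ContDiffOn ℝ (⊤ : ℕ∞) (P l j) U')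
    -- the differential of f maps the deformed frame at x into the span of the
    -- deformed frame at f x
    (hpush : ∀ x ∈ U, ∀ k : Fin p,
      push f x (defFrame a ω n k x) ∈
        Submodule.span ℂ (Set.range fun l : Fin p => defFrame a' α P l (f x))) :
    -- formula (5.8)
    (∀ x ∈ U, ∀ j k : Fin p,
      (∑ l, α l j (f x) * (pdzbar k (fun u => conj (h u.1 l)) x
          - ∑ i, ω k i x * pdz i (fun u => conj (h u.1 l)) x))
      = (∑ i, ω k i x * pdz i (fun u => h u.1 j) x)
          - pdzbar k (fun u => h u.1 j) x) ∧
    -- formula (5.9)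
    (∀ x ∈ U, ∀ (j : Fin d) (k : Fin p),
      (∑ l, P l j (f x) * (pdzbar k (fun u => conj (h u.1 l)) x
          - ∑ i, ω k i x * pdz i (fun u => conj (h u.1 l)) x))
      = (∑ i, n k i x * pdt i (fun u => ((g u j : ℝ) : ℂ)) x)
          - pdzbar k (fun u => ((g u j : ℝ) : ℂ)) x
          - (∑ l, a k l x * pdt l (fun u => ((g u j : ℝ) : ℂ)) x)
          + (∑ i, ω k i x * (pdz i (fun u => ((g u j : ℝ) : ℂ)) x
              + (∑ l, conj (a i l x) * pdt l (fun u => ((g u j : ℝ) : ℂ)) x)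
              - (∑ l, pdz i (fun u => h u.1 l) x * conj (a' l j (f x)))
              - (∑ l, pdz i (fun u => conj (h u.1 l)) x * a' l j (f x))))
          + (∑ l, pdzbar k (fun u => conj (h u.1 l)) x * a' l j (f x))
          + (∑ l, pdzbar k (fun u => h u.1 l) x * conj (a' l j (f x)))) := by
  -- differentiability of h and conj h in z
  have hdh : ∀ x ∈ U, ∀ j : Fin p, DifferentiableAt ℝ (fun z => h z j) x.1 := by
    intro x hx j
    have hdf : DifferentiableAt ℝ f x :=
      (hfsmooth.contDiffAt (hU.mem_nhds hx)).differentiableAt (by simp)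
    have h1 : DifferentiableAt ℝ (fun z : Fin p → ℂ => f (z, x.2)) x.1 :=
      hdf.comp x.1 (DifferentiableAt.prodMk differentiableAt_id (differentiableAt_const _))
    have h2 : (fun z : Fin p → ℂ => h z j) = fun z => (f (z, x.2)).1 j := by
      funext z; rw [hf]
    rw [h2]
    exact (differentiableAt_pi.mp h1.fst) j
  have hdhc : ∀ x ∈ U, ∀ j : Fin p,
      DifferentiableAt ℝ (fun z => conj (h z j)) x.1 := by
    intro x hx j
    have : (fun z : Fin p → ℂ => conj (h z j))
        = (⇑Complex.conjCLE) ∘ (fun z => h z j) := rfl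
    rw [this]
    exact Complex.conjCLE.differentiableAt.comp x.1 (hdh x hx j)
  -- push components in terms of h and g
  have pushfst : ∀ (x : Mdl p d) (v : CVec p d) (i : Fin p),
      (push f x v).1 i = derivVec v (fun u => h u.1 i) x := by
    intro x v i; unfold push; simp only [hf]
  have pushsnd1 : ∀ (x : Mdl p d) (v : CVec p d) (i : Fin p),
      (push f x v).2.1 i = derivVec v (fun u => conj (h u.1 i)) x := by
    intro x v i; unfold push; simp only [hf]
  have pushsnd2 : ∀ (x : Mdl p d) (v : CVec p d) (m : Fin d),
      (push f x v).2.2 m = derivVec v (fun u => ((g u m : ℝ) : ℂ)) x := by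
    intro x v m; unfold push; simp only [hf]
  constructor
  · -- formula (5.8)
    intro x hx j k
    obtain ⟨c, hc⟩ := (Submodule.mem_span_range_iff_exists_fun ℂ).mp (hpush x hx k)
    have E2 : ∀ l, c l
        = derivVec (defFrame a ω n k x) (fun u => conj (h u.1 l)) x := by
      intro l
      have h0 := congrArg (fun v : CVec p d => v.2.1 l) hc
      simpa only [comb_snd1, pushsnd1] using h0
    have E1 : ∀ i, -(∑ l, c l * α l i (f x))
        = derivVec (defFrame a ω n k x) (fun u => h u.1 i) x := by
      intro i
      have h0 := congrArg (fun v : CVec p d => v.1 i) hc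
      simpa only [comb_fst, pushfst] using h0
    have DH : derivVec (defFrame a ω n k x) (fun u => h u.1 j) x
        = pdzbar k (fun u => h u.1 j) x
          - ∑ i, ω k i x * pdz i (fun u => h u.1 j) x := by
      rw [derivVec_defFrame]
      have hz : ∀ m : Fin d, pdt m (fun u : Mdl p d => h u.1 j) x = 0 :=
        fun m => pdt_fst_comp (hdh x hx j) m
      simp [hz]
    have DHc : ∀ l, derivVec (defFrame a ω n k x) (fun u => conj (h u.1 l)) x
        = pdzbar k (fun u => conj (h u.1 l)) x
          - ∑ i, ω k i x * pdz i (fun u => conj (h u.1 l)) x := by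
      intro l
      rw [derivVec_defFrame]
      have hz : ∀ m : Fin d, pdt m (fun u : Mdl p d => conj (h u.1 l)) x = 0 :=
        fun m => pdt_fst_comp (hdhc x hx l) m
      simp [hz]
    have step : (∑ l, α l j (f x) * (pdzbar k (fun u => conj (h u.1 l)) x
          - ∑ i, ω k i x * pdz i (fun u => conj (h u.1 l)) x))
        = ∑ l, c l * α l j (f x) := by
      refine Finset.sum_congr rfl fun l _ => ?_
      rw [← DHc l, ← E2 l]; ring
    rw [step]
    linear_combination -(E1 j) - DH
  · -- formula (5.9)
    intro x hx j k
    obtain ⟨c, hc⟩ := (Submodule.mem_span_range_iff_exists_fun ℂ).mp (hpush x hx k)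
    have E2 : ∀ l, c l
        = derivVec (defFrame a ω n k x) (fun u => conj (h u.1 l)) x := by
      intro l
      have h0 := congrArg (fun v : CVec p d => v.2.1 l) hc
      simpa only [comb_snd1, pushsnd1] using h0
    have E1 : ∀ i, -(∑ l, c l * α l i (f x))
        = derivVec (defFrame a ω n k x) (fun u => h u.1 i) x := by
      intro i
      have h0 := congrArg (fun v : CVec p d => v.1 i) hc
      simpa only [comb_fst, pushfst] using h0
    have E3 : ∀ m, (∑ l, c l * (a' l m (f x)
          - (∑ i, α l i (f x) * conj (a' i m (f x))) - P l m (f x)))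
        = derivVec (defFrame a ω n k x) (fun u => ((g u m : ℝ) : ℂ)) x := by
      intro m
      have h0 := congrArg (fun v : CVec p d => v.2.2 m) hc
      simpa only [comb_snd2, pushsnd2] using h0
    have DH : ∀ i, derivVec (defFrame a ω n k x) (fun u => h u.1 i) x
        = pdzbar k (fun u => h u.1 i) x
          - ∑ q, ω k q x * pdz q (fun u => h u.1 i) x := by
      intro i
      rw [derivVec_defFrame]
      have hz : ∀ m : Fin d, pdt m (fun u : Mdl p d => h u.1 i) x = 0 :=
        fun m => pdt_fst_comp (hdh x hx i) m
      simp [hz]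
    have DHc : ∀ l, derivVec (defFrame a ω n k x) (fun u => conj (h u.1 l)) x
        = pdzbar k (fun u => conj (h u.1 l)) x
          - ∑ i, ω k i x * pdz i (fun u => conj (h u.1 l)) x := by
      intro l
      rw [derivVec_defFrame]
      have hz : ∀ m : Fin d, pdt m (fun u : Mdl p d => conj (h u.1 l)) x = 0 :=
        fun m => pdt_fst_comp (hdhc x hx l) m
      simp [hz]
    set G : Mdl p d → ℂ := fun u => ((g u j : ℝ) : ℂ) with hG
    -- T1
    have T1 : ∑ l, c l * a' l j (f x)
        = (∑ l, pdzbar k (fun u => conj (h u.1 l)) x * a' l j (f x))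
          - (∑ i, ω k i x * (∑ l, pdz i (fun u => conj (h u.1 l)) x * a' l j (f x))) := by
      calc ∑ l, c l * a' l j (f x)
          = ∑ l, (pdzbar k (fun u => conj (h u.1 l)) x
              - ∑ i, ω k i x * pdz i (fun u => conj (h u.1 l)) x) * a' l j (f x) := by
            refine Finset.sum_congr rfl fun l _ => ?_
            rw [E2 l, DHc l]
        _ = (∑ l, pdzbar k (fun u => conj (h u.1 l)) x * a' l j (f x))
            - ∑ l, (∑ i, ω k i x * pdz i (fun u => conj (h u.1 l)) x) * a' l j (f x) := by
            simp only [sub_mul, Finset.sum_sub_distrib]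
        _ = _ := by rw [swap_mul_sum]
    -- T2
    have T2 : ∑ l, c l * (∑ i, α l i (f x) * conj (a' i j (f x)))
        = (∑ i, ω k i x * (∑ l, pdz i (fun u => h u.1 l) x * conj (a' l j (f x))))
          - (∑ l, pdzbar k (fun u => h u.1 l) x * conj (a' l j (f x))) := by
      rw [swap_mul_sum']
      calc ∑ i, (∑ l, c l * α l i (f x)) * conj (a' i j (f x))
          = ∑ i, ((∑ q, ω k q x * pdz q (fun u => h u.1 i) x)
              - pdzbar k (fun u => h u.1 i) x) * conj (a' i j (f x)) := by
            refine Finset.sum_congr rfl fun i _ => ?_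
            have e1 := E1 i
            rw [DH i] at e1
            have : (∑ l, c l * α l i (f x))
                = (∑ q, ω k q x * pdz q (fun u => h u.1 i) x)
                  - pdzbar k (fun u => h u.1 i) x := by linear_combination -e1
            rw [this]
        _ = (∑ i, (∑ q, ω k q x * pdz q (fun u => h u.1 i) x) * conj (a' i j (f x)))
            - ∑ i, pdzbar k (fun u => h u.1 i) x * conj (a' i j (f x)) := by
            simp only [sub_mul, Finset.sum_sub_distrib]
        _ = _ := by rw [swap_mul_sum]
    -- DG
    have DG : derivVec (defFrame a ω n k x) G x
        = pdzbar k G x - (∑ i, ω k i x * pdz i G x)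
          + ((∑ m, a k m x * pdt m G x)
            - (∑ i, ω k i x * (∑ m, conj (a i m x) * pdt m G x))
            - (∑ m, n k m x * pdt m G x)) := by
      rw [derivVec_defFrame]
      congr 1
      calc ∑ m, (a k m x - (∑ i, ω k i x * conj (a i m x)) - n k m x) * pdt m G x
          = (∑ m, a k m x * pdt m G x)
            - (∑ m, (∑ i, ω k i x * conj (a i m x)) * pdt m G x)
            - (∑ m, n k m x * pdt m G x) := by
            simp only [sub_mul, Finset.sum_sub_distrib]
        _ = _ := by rw [swap_mul_sum]
    -- key
    have key : ∑ l, c l * P l j (f x)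
        = (∑ l, c l * a' l j (f x))
          - (∑ l, c l * (∑ i, α l i (f x) * conj (a' i j (f x))))
          - derivVec (defFrame a ω n k x) G x := by
      have e3 := E3 j
      simp only [mul_sub, Finset.sum_sub_distrib] at e3
      linear_combination -e3
    have step : (∑ l, P l j (f x) * (pdzbar k (fun u => conj (h u.1 l)) x
          - ∑ i, ω k i x * pdz i (fun u => conj (h u.1 l)) x))
        = ∑ l, c l * P l j (f x) := by
      refine Finset.sum_congr rfl fun l _ => ?_
      rw [← DHc l, ← E2 l]; ring
    rw [step, key, T1, T2, DG]
    have dist : ∑ i, ω k i x * (pdz i G x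
          + (∑ l, conj (a i l x) * pdt l G x)
          - (∑ l, pdz i (fun u => h u.1 l) x * conj (a' l j (f x)))
          - (∑ l, pdz i (fun u => conj (h u.1 l)) x * a' l j (f x)))
        = (∑ i, ω k i x * pdz i G x)
          + (∑ i, ω k i x * (∑ l, conj (a i l x) * pdt l G x))
          - (∑ i, ω k i x * (∑ l, pdz i (fun u => h u.1 l) x * conj (a' l j (f x))))
          - (∑ i, ω k i x * (∑ l, pdz i (fun u => conj (h u.1 l)) x * a' l j (f x))) := by
      simp only [mul_add, mul_sub, Finset.sum_add_distrib, Finset.sum_sub_distrib]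
    rw [dist]
    ring
end
end

section
/- (Proposition 6.1 (i), local form: transverse integrability equations.) The family {e_1', …, e_p', ∂/∂t_1, …, ∂/∂t_d} of complex vector fields on U is involutive if and only if the following two conditions hold: for all 1 ≤ i, j ≤ p and 1 ≤ k ≤ d, ∂ω_{ij}/∂t_k = 0 (formula (6.3)); and for all 1 ≤ i, j ≤ p, Σ_l ((e_j·ω_{il}) − (e_i·ω_{jl})) ē_l + [Σ_l ω_{il} ē_l, Σ_l ω_{jl} ē_l] = 0 (formula (6.2)). -/
noncomputable section
open Complex ComplexConjugate

variable {p d : ℕ}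

section Helpers
variable {a : Fin p → Fin d → Mdl p d → ℂ} {ω : Fin p → Fin p → Mdl p d → ℂ}

lemma fderiv_conj_apply (φ : Mdl p d → ℂ) (u w : Mdl p d) :
    fderiv ℝ (fun x => conj (φ x)) u w = conj (fderiv ℝ φ u w) := by
  have h2 := Complex.conjCLE.comp_fderiv (f := φ) (x := u)
  have h3 : (fun x => conj (φ x)) = (Complex.conjCLE ∘ φ) := rfl
  rw [h3, h2]; rfl

lemma pdz_conj (i : Fin p) (φ : Mdl p d → ℂ) (u : Mdl p d) :
    pdz i (fun x => conj (φ x)) u = conj (pdzbar i φ u) := by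
  unfold pdz pdzbar
  rw [fderiv_conj_apply, fderiv_conj_apply]
  simp only [map_mul, map_add, map_div₀, map_one, map_ofNat, Complex.conj_I]
  ring

lemma pdzbar_conj (i : Fin p) (φ : Mdl p d → ℂ) (u : Mdl p d) :
    pdzbar i (fun x => conj (φ x)) u = conj (pdz i φ u) := by
  unfold pdz pdzbar
  rw [fderiv_conj_apply, fderiv_conj_apply]
  simp only [map_mul, map_sub, map_add, map_div₀, map_one, map_ofNat, Complex.conj_I]
  ring

lemma pdt_conj (l : Fin d) (φ : Mdl p d → ℂ) (u : Mdl p d) :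
    pdt l (fun x => conj (φ x)) u = conj (pdt l φ u) := by
  unfold pdt; rw [fderiv_conj_apply]

lemma pdz_const (i : Fin p) (c : ℂ) (u : Mdl p d) : pdz i (fun _ => c) u = 0 := by
  simp [pdz, fderiv_const]

lemma pdzbar_const (i : Fin p) (c : ℂ) (u : Mdl p d) : pdzbar i (fun _ => c) u = 0 := by
  simp [pdzbar, fderiv_const]

lemma pdt_const (l : Fin d) (c : ℂ) (u : Mdl p d) : pdt l (fun _ => c) u = 0 := by
  simp [pdt, fderiv_const]

lemma pdz_neg (i : Fin p) (φ : Mdl p d → ℂ) (u : Mdl p d) :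
    pdz i (fun x => -(φ x)) u = -(pdz i φ u) := by
  simp [pdz, fderiv_neg]; ring

lemma pdzbar_neg (i : Fin p) (φ : Mdl p d → ℂ) (u : Mdl p d) :
    pdzbar i (fun x => -(φ x)) u = -(pdzbar i φ u) := by
  simp [pdzbar, fderiv_neg]; ring

lemma pdt_neg (l : Fin d) (φ : Mdl p d → ℂ) (u : Mdl p d) :
    pdt l (fun x => -(φ x)) u = -(pdt l φ u) := by
  simp [pdt, fderiv_neg]

lemma pdz_mul (i : Fin p) {φ ψ : Mdl p d → ℂ} {u : Mdl p d}
    (hφ : DifferentiableAt ℝ φ u) (hψ : DifferentiableAt ℝ ψ u) :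
    pdz i (fun x => φ x * ψ x) u = φ u * pdz i ψ u + ψ u * pdz i φ u := by
  simp [pdz, fderiv_fun_mul hφ hψ, smul_eq_mul]; ring

lemma pdzbar_mul (i : Fin p) {φ ψ : Mdl p d → ℂ} {u : Mdl p d}
    (hφ : DifferentiableAt ℝ φ u) (hψ : DifferentiableAt ℝ ψ u) :
    pdzbar i (fun x => φ x * ψ x) u = φ u * pdzbar i ψ u + ψ u * pdzbar i φ u := by
  simp [pdzbar, fderiv_fun_mul hφ hψ, smul_eq_mul]; ring

lemma pdt_mul (l : Fin d) {φ ψ : Mdl p d → ℂ} {u : Mdl p d}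
    (hφ : DifferentiableAt ℝ φ u) (hψ : DifferentiableAt ℝ ψ u) :
    pdt l (fun x => φ x * ψ x) u = φ u * pdt l ψ u + ψ u * pdt l φ u := by
  simp [pdt, fderiv_fun_mul hφ hψ, smul_eq_mul]

lemma pdz_sum {n : ℕ} (i : Fin p) {φ : Fin n → Mdl p d → ℂ} {u : Mdl p d}
    (hφ : ∀ k, DifferentiableAt ℝ (φ k) u) :
    pdz i (fun x => ∑ k, φ k x) u = ∑ k, pdz i (φ k) u := by
  simp only [pdz, fderiv_fun_sum (fun k _ => hφ k), ContinuousLinearMap.sum_apply,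
    Finset.mul_sum, Finset.sum_sub_distrib, ← Finset.sum_sub_distrib]


lemma pdzbar_sum {n : ℕ} (i : Fin p) {φ : Fin n → Mdl p d → ℂ} {u : Mdl p d}
    (hφ : ∀ k, DifferentiableAt ℝ (φ k) u) :
    pdzbar i (fun x => ∑ k, φ k x) u = ∑ k, pdzbar i (φ k) u := by
  simp only [pdzbar, fderiv_fun_sum (fun k _ => hφ k), ContinuousLinearMap.sum_apply,
    Finset.mul_sum, ← Finset.sum_add_distrib]

lemma pdt_sum {n : ℕ} (l : Fin d) {φ : Fin n → Mdl p d → ℂ} {u : Mdl p d}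
    (hφ : ∀ k, DifferentiableAt ℝ (φ k) u) :
    pdt l (fun x => ∑ k, φ k x) u = ∑ k, pdt l (φ k) u := by
  simp only [pdt, fderiv_fun_sum (fun k _ => hφ k), ContinuousLinearMap.sum_apply]

-- derivVec calculus

lemma derivVec_const (v : CVec p d) (c : ℂ) (u : Mdl p d) :
    derivVec v (fun _ => c) u = 0 := by
  simp [derivVec, pdz_const, pdzbar_const, pdt_const]

lemma derivVec_neg (v : CVec p d) (φ : Mdl p d → ℂ) (u : Mdl p d) :
    derivVec v (fun x => -(φ x)) u = -(derivVec v φ u) := by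
  simp [derivVec, pdz_neg, pdzbar_neg, pdt_neg, mul_neg, Finset.sum_neg_distrib]
  ring

lemma derivVec_mul (v : CVec p d) {φ ψ : Mdl p d → ℂ} {u : Mdl p d}
    (hφ : DifferentiableAt ℝ φ u) (hψ : DifferentiableAt ℝ ψ u) :
    derivVec v (fun x => φ x * ψ x) u
      = φ u * derivVec v ψ u + ψ u * derivVec v φ u := by
  simp only [derivVec, pdz_mul _ hφ hψ, pdzbar_mul _ hφ hψ, pdt_mul _ hφ hψ,
    mul_add, Finset.mul_sum, mul_left_comm, mul_comm]
  simp only [add_mul, Finset.sum_add_distrib, mul_assoc, mul_left_comm, mul_comm]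
  ring

lemma derivVec_sum {n : ℕ} (v : CVec p d) {φ : Fin n → Mdl p d → ℂ} {u : Mdl p d}
    (hφ : ∀ k, DifferentiableAt ℝ (φ k) u) :
    derivVec v (fun x => ∑ k, φ k x) u = ∑ k, derivVec v (φ k) u := by
  simp only [derivVec, pdz_sum _ hφ, pdzbar_sum _ hφ, pdt_sum _ hφ,
    Finset.mul_sum, Finset.sum_add_distrib]
  rw [Finset.sum_comm (γ := Fin n), Finset.sum_comm (γ := Fin n), Finset.sum_comm (γ := Fin n)]

-- linearity in the vector
lemma derivVec_vsub (v w : CVec p d) (φ : Mdl p d → ℂ) (u : Mdl p d) :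
    derivVec (v - w) φ u = derivVec v φ u - derivVec w φ u := by
  simp [derivVec, sub_mul, Finset.sum_sub_distrib]
  ring

lemma derivVec_vsum {n : ℕ} (c : Fin n → ℂ) (w : Fin n → CVec p d)
    (φ : Mdl p d → ℂ) (u : Mdl p d) :
    derivVec (∑ k, c k • w k) φ u = ∑ k, c k * derivVec (w k) φ u := by
  simp only [derivVec, Prod.fst_sum, Prod.snd_sum, Prod.smul_fst, Prod.smul_snd,
    Finset.sum_apply, Pi.smul_apply, smul_eq_mul, Finset.sum_mul, mul_add,
    Finset.sum_add_distrib, Finset.mul_sum, mul_assoc]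
  rw [Finset.sum_comm (γ := Fin n), Finset.sum_comm (γ := Fin n), Finset.sum_comm (γ := Fin n)]

-- ## component lemmas

lemma defCT_fst (i : Fin p) (u : Mdl p d) (l : Fin p) :
    (defCT a ω i u).1 l = -(ω i l u) := by
  simp [defCT, eFrame, eBarFrame, Prod.fst_sum, Pi.single_apply,
    Finset.sum_apply, mul_ite, Finset.sum_ite_eq']

lemma defCT_snd (i : Fin p) (u : Mdl p d) (m : Fin p) :
    (defCT a ω i u).2.1 m = (Pi.single i 1 : Fin p → ℂ) m := by
  simp [defCT, eFrame, eBarFrame, Prod.snd_sum, Prod.fst_sum, Finset.sum_apply]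

lemma defCT_trd (i : Fin p) (u : Mdl p d) (m : Fin d) :
    (defCT a ω i u).2.2 m = a i m u - ∑ l, ω i l u * conj (a l m u) := by
  simp [defCT, eFrame, eBarFrame, Prod.snd_sum, Finset.sum_apply]

lemma W_fst (i : Fin p) (u : Mdl p d) (m : Fin p) :
    (∑ l, ω i l u • eBarFrame a l u).1 m = ω i m u := by
  simp [eBarFrame, Prod.fst_sum, Pi.single_apply, Finset.sum_apply, mul_ite,
    Finset.sum_ite_eq']

lemma W_snd (i : Fin p) (u : Mdl p d) (m : Fin p) :
    (∑ l, ω i l u • eBarFrame a l u).2.1 m = 0 := by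
  simp [eBarFrame, Prod.snd_sum, Prod.fst_sum, Finset.sum_apply]

lemma W_trd (i : Fin p) (u : Mdl p d) (m : Fin d) :
    (∑ l, ω i l u • eBarFrame a l u).2.2 m = ∑ l, ω i l u * conj (a l m u) := by
  simp [eBarFrame, Prod.snd_sum, Finset.sum_apply]

-- derivAlong expansions
lemma derivAlong_dt (k : Fin d) (φ : Mdl p d → ℂ) (u : Mdl p d) :
    derivAlong (dtField k) φ u = pdt k φ u := by
  simp [derivAlong, derivVec, dtField, Pi.single_apply, mul_ite, Finset.sum_ite_eq']

lemma derivAlong_e (i : Fin p) (φ : Mdl p d → ℂ) (u : Mdl p d) :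
    derivAlong (eFrame a i) φ u = pdzbar i φ u + ∑ l, a i l u * pdt l φ u := by
  simp [derivAlong, derivVec, eFrame, Pi.single_apply, ite_mul, Finset.sum_ite_eq]

lemma derivAlong_ebar (i : Fin p) (φ : Mdl p d → ℂ) (u : Mdl p d) :
    derivAlong (eBarFrame a i) φ u = pdz i φ u + ∑ l, conj (a i l u) * pdt l φ u := by
  simp [derivAlong, derivVec, eBarFrame, Pi.single_apply, ite_mul, Finset.sum_ite_eq]

lemma derivAlong_ebar_conj (i : Fin p) (φ : Mdl p d → ℂ) (u : Mdl p d) :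
    derivAlong (eBarFrame a i) (fun x => conj (φ x)) u
      = conj (derivAlong (eFrame a i) φ u) := by
  rw [derivAlong_ebar, derivAlong_e]
  simp only [pdz_conj, pdt_conj, map_add, map_sum, map_mul]

lemma derivAlong_defCT (i : Fin p) (φ : Mdl p d → ℂ) (u : Mdl p d) :
    derivAlong (defCT a ω i) φ u = derivAlong (eFrame a i) φ u
      - ∑ l, ω i l u * derivAlong (eBarFrame a l) φ u := by
  unfold derivAlong defCT
  rw [derivVec_vsub, derivVec_vsum]

lemma derivAlong_W (i : Fin p) (φ : Mdl p d → ℂ) (u : Mdl p d) :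
    derivAlong (fun v => ∑ l, ω i l v • eBarFrame a l v) φ u
      = ∑ l, ω i l u * derivAlong (eBarFrame a l) φ u := by
  unfold derivAlong
  rw [derivVec_vsum]

-- ## span membership
lemma mem_span_iff (u : Mdl p d) (v : CVec p d) :
    v ∈ Submodule.span ℂ (Set.range fun k => Sum.elim (defCT a ω) (dtField : Fin d → CVF p d) k u)
      ↔ ∀ l, v.1 l + ∑ i, v.2.1 i * ω i l u = 0 := by
  constructor
  · intro hv
    let L : CVec p d →ₗ[ℂ] (Fin p → ℂ) :=
      { toFun := fun w => fun l => w.1 l + ∑ i, w.2.1 i * ω i l u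
        map_add' := by
          intro x y; funext l
          simp only [Prod.fst_add, Prod.snd_add, Pi.add_apply, add_mul,
            Finset.sum_add_distrib]
          ring
        map_smul' := by
          intro c x; funext l
          simp only [Prod.smul_fst, Prod.smul_snd, Pi.smul_apply, smul_eq_mul,
            RingHom.id_apply, Pi.add_apply]
          rw [mul_add, Finset.mul_sum]
          simp [mul_assoc] }
    have hle : Submodule.span ℂ
        (Set.range fun k => Sum.elim (defCT a ω) (dtField : Fin d → CVF p d) k u)
        ≤ LinearMap.ker L := by
      rw [Submodule.span_le]
      rintro w ⟨k, rfl⟩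
      rcases k with i | t
      · have : L (defCT a ω i u) = 0 := by
          funext l
          simp [L, defCT_fst, defCT_snd, Pi.single_apply, ite_mul, Finset.sum_ite_eq]
        simpa [LinearMap.mem_ker] using this
      · have : L (dtField t u) = 0 := by
          funext l
          simp [L, dtField]
        simpa [LinearMap.mem_ker] using this
    have := hle hv
    rw [LinearMap.mem_ker] at this
    intro l
    exact congrFun this l
  · intro hcond
    have hveq : v = (∑ i, v.2.1 i • (defCT a ω i u))
        + ∑ l, (v.2.2 l - ∑ i, v.2.1 i * (defCT a ω i u).2.2 l) • dtField l u := by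
      refine Prod.ext ?_ (Prod.ext ?_ ?_)
      · funext m
        have := hcond m
        simp only [Prod.fst_add, Prod.fst_sum, Prod.smul_fst, Pi.add_apply,
          Finset.sum_apply, Pi.smul_apply, smul_eq_mul, defCT_fst, dtField,
          Pi.zero_apply, mul_zero, mul_neg, Finset.sum_const_zero, add_zero]
        rw [← neg_eq_iff_add_eq_zero] at this
        simp only [Finset.sum_neg_distrib, ← this, neg_neg]
      · funext m
        simp only [Prod.snd_add, Prod.fst_add, Prod.fst_sum, Prod.snd_sum,
          Prod.smul_fst, Prod.smul_snd, Pi.add_apply, Finset.sum_apply,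
          Pi.smul_apply, smul_eq_mul, defCT_snd, dtField, Pi.zero_apply,
          mul_zero, Finset.sum_const_zero, add_zero, Pi.single_apply, mul_ite,
          mul_one, Finset.sum_ite_eq']
        simp
      · funext m
        simp only [Prod.snd_add, Prod.snd_sum, Prod.smul_snd, Pi.add_apply,
          Finset.sum_apply, Pi.smul_apply, smul_eq_mul, dtField,
          Pi.single_apply, mul_ite, mul_one, mul_zero, Finset.sum_ite_eq']
        simp
    rw [hveq]
    refine Submodule.add_mem _ (Submodule.sum_mem _ fun i _ => ?_)
      (Submodule.sum_mem _ fun l _ => ?_)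
    · exact Submodule.smul_mem _ _ (Submodule.subset_span ⟨Sum.inl i, rfl⟩)
    · exact Submodule.smul_mem _ _ (Submodule.subset_span ⟨Sum.inr l, rfl⟩)

-- ## function-level component rewrites
lemma fun_defCT_fst (i : Fin p) (l : Fin p) :
    (fun v => (defCT a ω i v).1 l) = fun v => -(ω i l v) :=
  funext fun v => defCT_fst i v l

lemma fun_defCT_snd (i : Fin p) (m : Fin p) :
    (fun v => (defCT a ω i v).2.1 m) = fun _ => (Pi.single i 1 : Fin p → ℂ) m :=
  funext fun v => defCT_snd i v m

lemma fun_W_fst (i : Fin p) (m : Fin p) :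
    (fun v => (∑ l, ω i l v • eBarFrame a l v).1 m) = fun v => ω i m v :=
  funext fun v => W_fst i v m

lemma fun_W_snd (i : Fin p) (m : Fin p) :
    (fun v => (∑ l, ω i l v • eBarFrame a l v).2.1 m) = fun _ => (0 : ℂ) :=
  funext fun v => W_snd i v m

lemma fun_W_trd (i : Fin p) (m : Fin d) :
    (fun v => (∑ l, ω i l v • eBarFrame a l v).2.2 m)
      = fun v => ∑ l, ω i l v * conj (a l m v) :=
  funext fun v => W_trd i v m

-- ## bracket components
lemma bracket_defCT_defCT_fst (i j : Fin p) (u : Mdl p d) (l : Fin p) :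
    (bracket (defCT a ω i) (defCT a ω j) u).1 l
      = derivAlong (defCT a ω j) (ω i l) u - derivAlong (defCT a ω i) (ω j l) u := by
  show derivAlong (defCT a ω i) (fun v => (defCT a ω j v).1 l) u
      - derivAlong (defCT a ω j) (fun v => (defCT a ω i v).1 l) u = _
  rw [fun_defCT_fst, fun_defCT_fst]
  unfold derivAlong
  rw [derivVec_neg, derivVec_neg]
  ring_nf

lemma bracket_defCT_defCT_snd (i j : Fin p) (u : Mdl p d) (m : Fin p) :
    (bracket (defCT a ω i) (defCT a ω j) u).2.1 m = 0 := by
  show derivAlong (defCT a ω i) (fun v => (defCT a ω j v).2.1 m) u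
      - derivAlong (defCT a ω j) (fun v => (defCT a ω i v).2.1 m) u = 0
  rw [fun_defCT_snd, fun_defCT_snd]
  unfold derivAlong
  rw [derivVec_const, derivVec_const, sub_zero]

lemma bracket_defCT_dt_fst (i : Fin p) (k : Fin d) (u : Mdl p d) (l : Fin p) :
    (bracket (defCT a ω i) (dtField k) u).1 l = pdt k (ω i l) u := by
  show derivAlong (defCT a ω i) (fun v => (dtField k v).1 l) u
      - derivAlong (dtField k) (fun v => (defCT a ω i v).1 l) u = _
  rw [show (fun v => (dtField (p := p) k v).1 l) = fun _ => (0:ℂ) from rfl, fun_defCT_fst]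
  rw [derivAlong_dt, pdt_neg]
  unfold derivAlong
  rw [derivVec_const]
  ring

lemma bracket_defCT_dt_snd (i : Fin p) (k : Fin d) (u : Mdl p d) (m : Fin p) :
    (bracket (defCT a ω i) (dtField k) u).2.1 m = 0 := by
  show derivAlong (defCT a ω i) (fun v => (dtField k v).2.1 m) u
      - derivAlong (dtField k) (fun v => (defCT a ω i v).2.1 m) u = 0
  rw [show (fun v => (dtField (p := p) k v).2.1 m) = fun _ => (0:ℂ) from rfl, fun_defCT_snd]
  unfold derivAlong
  rw [derivVec_const, derivVec_const, sub_zero]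

lemma bracket_dt_defCT_fst (i : Fin p) (k : Fin d) (u : Mdl p d) (l : Fin p) :
    (bracket (dtField k) (defCT a ω i) u).1 l = -(pdt k (ω i l) u) := by
  show derivAlong (dtField k) (fun v => (defCT a ω i v).1 l) u
      - derivAlong (defCT a ω i) (fun v => (dtField k v).1 l) u = _
  rw [show (fun v => (dtField (p := p) k v).1 l) = fun _ => (0:ℂ) from rfl, fun_defCT_fst]
  rw [derivAlong_dt, pdt_neg]
  unfold derivAlong
  rw [derivVec_const]
  ring

lemma bracket_dt_defCT_snd (i : Fin p) (k : Fin d) (u : Mdl p d) (m : Fin p) :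
    (bracket (dtField k) (defCT a ω i) u).2.1 m = 0 := by
  show derivAlong (dtField k) (fun v => (defCT a ω i v).2.1 m) u
      - derivAlong (defCT a ω i) (fun v => (dtField k v).2.1 m) u = 0
  rw [show (fun v => (dtField (p := p) k v).2.1 m) = fun _ => (0:ℂ) from rfl, fun_defCT_snd]
  unfold derivAlong
  rw [derivVec_const, derivVec_const, sub_zero]

lemma bracket_dt_dt (k k' : Fin d) (u : Mdl p d) :
    bracket (dtField (p := p) k) (dtField k') u = 0 := by
  refine Prod.ext (funext fun l => ?_) (Prod.ext (funext fun m => ?_) (funext fun m => ?_))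
  · show derivAlong (dtField k) (fun v => (dtField (p := p) k' v).1 l) u
      - derivAlong (dtField k') (fun v => (dtField (p := p) k v).1 l) u = _
    rw [show (fun v => (dtField (p := p) k' v).1 l) = fun _ => (0:ℂ) from rfl,
      show (fun v => (dtField (p := p) k v).1 l) = fun _ => (0:ℂ) from rfl]
    unfold derivAlong
    rw [derivVec_const, derivVec_const, sub_zero]
    rfl
  · show derivAlong (dtField k) (fun v => (dtField (p := p) k' v).2.1 m) u
      - derivAlong (dtField k') (fun v => (dtField (p := p) k v).2.1 m) u = _
    rw [show (fun v => (dtField (p := p) k' v).2.1 m) = fun _ => (0:ℂ) from rfl,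
      show (fun v => (dtField (p := p) k v).2.1 m) = fun _ => (0:ℂ) from rfl]
    unfold derivAlong
    rw [derivVec_const, derivVec_const, sub_zero]
    rfl
  · show derivAlong (dtField k) (fun v => (dtField (p := p) k' v).2.2 m) u
      - derivAlong (dtField k') (fun v => (dtField (p := p) k v).2.2 m) u = _
    rw [show (fun v => (dtField (p := p) k' v).2.2 m) = fun _ => ((Pi.single k' 1 : Fin d → ℂ) m) from rfl,
      show (fun v => (dtField (p := p) k v).2.2 m) = fun _ => ((Pi.single k 1 : Fin d → ℂ) m) from rfl]
    unfold derivAlong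
    rw [derivVec_const, derivVec_const, sub_zero]
    rfl

lemma bracket_W_fst (i j : Fin p) (u : Mdl p d) (m : Fin p) :
    (bracket (fun v => ∑ l, ω i l v • eBarFrame a l v)
        (fun v => ∑ l, ω j l v • eBarFrame a l v) u).1 m
      = derivAlong (fun v => ∑ l, ω i l v • eBarFrame a l v) (ω j m) u
        - derivAlong (fun v => ∑ l, ω j l v • eBarFrame a l v) (ω i m) u := by
  show derivAlong _ (fun v => (∑ l, ω j l v • eBarFrame a l v).1 m) u
      - derivAlong _ (fun v => (∑ l, ω i l v • eBarFrame a l v).1 m) u = _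
  rw [fun_W_fst, fun_W_fst]

lemma bracket_W_snd (i j : Fin p) (u : Mdl p d) (m : Fin p) :
    (bracket (fun v => ∑ l, ω i l v • eBarFrame a l v)
        (fun v => ∑ l, ω j l v • eBarFrame a l v) u).2.1 m = 0 := by
  show derivAlong _ (fun v => (∑ l, ω j l v • eBarFrame a l v).2.1 m) u
      - derivAlong _ (fun v => (∑ l, ω i l v • eBarFrame a l v).2.1 m) u = 0
  rw [fun_W_snd, fun_W_snd]
  unfold derivAlong
  rw [derivVec_const, derivVec_const, sub_zero]

lemma bracket_W_trd (i j : Fin p) (u : Mdl p d) (m : Fin d) :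
    (bracket (fun v => ∑ l, ω i l v • eBarFrame a l v)
        (fun v => ∑ l, ω j l v • eBarFrame a l v) u).2.2 m
      = derivAlong (fun v => ∑ l, ω i l v • eBarFrame a l v)
          (fun v => ∑ l, ω j l v * conj (a l m v)) u
        - derivAlong (fun v => ∑ l, ω j l v • eBarFrame a l v)
          (fun v => ∑ l, ω i l v * conj (a l m v)) u := by
  show derivAlong _ (fun v => (∑ l, ω j l v • eBarFrame a l v).2.2 m) u
      - derivAlong _ (fun v => (∑ l, ω i l v • eBarFrame a l v).2.2 m) u = _
  rw [fun_W_trd, fun_W_trd]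

-- sum of eBar with general coefficients
lemma sumEbar_fst (c : Fin p → ℂ) (u : Mdl p d) (m : Fin p) :
    (∑ l, c l • eBarFrame a l u).1 m = c m := by
  simp [eBarFrame, Prod.fst_sum, Pi.single_apply, Finset.sum_apply, mul_ite,
    Finset.sum_ite_eq']

lemma sumEbar_snd (c : Fin p → ℂ) (u : Mdl p d) (m : Fin p) :
    (∑ l, c l • eBarFrame a l u).2.1 m = 0 := by
  simp [eBarFrame, Prod.snd_sum, Prod.fst_sum, Finset.sum_apply]

lemma sumEbar_trd (c : Fin p → ℂ) (u : Mdl p d) (m : Fin d) :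
    (∑ l, c l • eBarFrame a l u).2.2 m = ∑ l, c l * conj (a l m u) := by
  simp [eBarFrame, Prod.snd_sum, Finset.sum_apply]

-- hee consequence: symmetry
lemma hee_symm {U : Set (Mdl p d)}
    (hee : ∀ i j : Fin p, ∀ u ∈ U, bracket (eFrame a i) (eFrame a j) u = 0)
    (k l : Fin p) (m : Fin d) {u : Mdl p d} (hu : u ∈ U) :
    derivAlong (eFrame a k) (a l m) u = derivAlong (eFrame a l) (a k m) u := by
  have h := congrFun (congrArg (fun w => w.2.2) (hee k l u hu)) m
  have h2 : derivAlong (eFrame a k) (a l m) u - derivAlong (eFrame a l) (a k m) u = 0 := h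
  exact sub_eq_zero.mp h2

-- ## abstract algebra for the third component of (6.2)
lemma aux_alg {n : ℕ} (x y c di dj ab : Fin n → ℂ) (F : Fin n → Fin n → ℂ)
    (hsym : ∀ k l, F k l = F l k)
    (hfc : ∀ l, c l + (di l - dj l) = 0) :
    (∑ l, c l * ab l) + ((∑ l, (y l * ∑ k, x k * F k l + ab l * di l))
      - (∑ l, (x l * ∑ k, y k * F k l + ab l * dj l))) = 0 := by
  have h1 : ∑ l, ∑ k, y l * x k * F k l = ∑ l, ∑ k, x l * y k * F k l := by
    rw [Finset.sum_comm]
    exact Finset.sum_congr rfl fun l _ => Finset.sum_congr rfl fun k _ => by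
      rw [hsym k l]; ring
  have h2 : ∑ l, (c l + (di l - dj l)) * ab l = 0 :=
    Finset.sum_eq_zero fun l _ => by rw [hfc l]; ring
  simp only [Finset.mul_sum] at h1 ⊢
  simp only [add_mul, sub_mul, Finset.sum_add_distrib, Finset.sum_sub_distrib] at h2 ⊢
  have e1 : ∀ (f g : Fin n → ℂ), ∑ x, f x * g x = ∑ x, g x * f x :=
    fun f g => Finset.sum_congr rfl fun _ _ => mul_comm _ _
  rw [e1 ab di, e1 ab dj]
  ring_nf at h2 ⊢
  linear_combination h2 + h1

lemma derivAlong_W_trd (r s : Fin p) (m : Fin d) (u : Mdl p d)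
    (h1 : ∀ l, DifferentiableAt ℝ (ω s l) u)
    (h2 : ∀ l, DifferentiableAt ℝ (fun v => conj (a l m v)) u) :
    derivAlong (fun v => ∑ l, ω r l v • eBarFrame a l v)
        (fun v => ∑ l, ω s l v * conj (a l m v)) u
      = ∑ l, (ω s l u * ∑ k, ω r k u * conj (derivAlong (eFrame a k) (a l m) u)
          + conj (a l m u)
            * derivAlong (fun v => ∑ l', ω r l' v • eBarFrame a l' v) (ω s l) u) := by
  have e0 : derivAlong (fun v => ∑ l, ω r l v • eBarFrame a l v)
      (fun v => ∑ l, ω s l v * conj (a l m v)) u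
      = ∑ l, derivAlong (fun v => ∑ l', ω r l' v • eBarFrame a l' v)
          (fun v => ω s l v * conj (a l m v)) u := by
    unfold derivAlong
    exact derivVec_sum _ fun l => (h1 l).mul (h2 l)
  rw [e0]
  refine Finset.sum_congr rfl fun l _ => ?_
  have e1 : derivAlong (fun v => ∑ l', ω r l' v • eBarFrame a l' v)
      (fun v => ω s l v * conj (a l m v)) u
      = ω s l u * derivAlong (fun v => ∑ l', ω r l' v • eBarFrame a l' v)
          (fun v => conj (a l m v)) u
        + conj (a l m u)
          * derivAlong (fun v => ∑ l', ω r l' v • eBarFrame a l' v) (ω s l) u := by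
    unfold derivAlong
    exact derivVec_mul _ (h1 l) (h2 l)
  rw [e1]
  congr 2
  rw [derivAlong_W]
  exact Finset.sum_congr rfl fun k _ => by rw [derivAlong_ebar_conj]


end Helpers

/-- Proposition 6.1 (i) of the paper, local form.
The family `{e_1', …, e_p', ∂/∂t_1, …, ∂/∂t_d}` is involutive on `U` if and only
if the coefficients `ω_{ij}` satisfy `∂ω_{ij}/∂t_k = 0` (formula (6.3)) and
`Σ_l ((e_j·ω_{il}) − (e_i·ω_{jl})) ē_l + [Σ_l ω_{il} ē_l, Σ_l ω_{jl} ē_l] = 0`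
(formula (6.2)) on `U`. -/
theorem statement11 (p d : ℕ) (hp : 1 ≤ p) (hd : 1 ≤ d)
    (U : Set (Mdl p d)) (hU : IsOpen U)
    (a : Fin p → Fin d → Mdl p d → ℂ)
    (ha : ∀ i l, ContDiffOn ℝ (⊤ : ℕ∞) (a i l) U)
    (ω : Fin p → Fin p → Mdl p d → ℂ)
    (hω : ∀ i j, ContDiffOn ℝ (⊤ : ℕ∞) (ω i j) U)
    -- the canonical frames of a completely integrable CR polarized structure
    (hee : ∀ i j : Fin p, ∀ u ∈ U, bracket (eFrame a i) (eFrame a j) u = 0) :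
    InvolutiveOn (Sum.elim (defCT a ω) (dtField : Fin d → CVF p d)) U ↔
      ((∀ i j : Fin p, ∀ k : Fin d, ∀ u ∈ U, pdt k (ω i j) u = 0) ∧
       (∀ i j : Fin p, ∀ u ∈ U,
         (∑ l, (derivAlong (eFrame a j) (ω i l) u
             - derivAlong (eFrame a i) (ω j l) u) • eBarFrame a l u)
         + bracket (fun v => ∑ l, ω i l v • eBarFrame a l v)
             (fun v => ∑ l, ω j l v • eBarFrame a l v) u = 0)) := by
  have hωd : ∀ i j, ∀ u ∈ U, DifferentiableAt ℝ (ω i j) u := fun i j u hu =>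
    ((hω i j).differentiableOn (by simp)).differentiableAt (hU.mem_nhds hu)
  have had : ∀ l m, ∀ u ∈ U, DifferentiableAt ℝ (fun v => conj (a l m v)) u :=
    fun l m u hu => Complex.conjCLE.differentiableAt.comp u
      (((ha l m).differentiableOn (by simp)).differentiableAt (hU.mem_nhds hu))
  constructor
  · intro hInv
    have h63 : ∀ i j : Fin p, ∀ k : Fin d, ∀ u ∈ U, pdt k (ω i j) u = 0 := by
      intro i j k u hu
      have hm := (mem_span_iff (a := a) (ω := ω) u _).1 (hInv (Sum.inl i) (Sum.inr k) u hu) j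
      simpa [Sum.elim_inl, Sum.elim_inr, bracket_defCT_dt_fst, bracket_defCT_dt_snd]
        using hm
    refine ⟨h63, ?_⟩
    intro i j u hu
    -- first-component condition from involutivity
    have h2 : ∀ m, derivAlong (defCT a ω j) (ω i m) u
        - derivAlong (defCT a ω i) (ω j m) u = 0 := by
      intro m
      have hm := (mem_span_iff (a := a) (ω := ω) u _).1 (hInv (Sum.inl i) (Sum.inl j) u hu) m
      simpa [Sum.elim_inl, bracket_defCT_defCT_fst, bracket_defCT_defCT_snd] using hm
    have hfc : ∀ m, (derivAlong (eFrame a j) (ω i m) u - derivAlong (eFrame a i) (ω j m) u)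
        + (derivAlong (fun v => ∑ l, ω i l v • eBarFrame a l v) (ω j m) u
          - derivAlong (fun v => ∑ l, ω j l v • eBarFrame a l v) (ω i m) u) = 0 := by
      intro m
      have := h2 m
      rw [derivAlong_defCT, derivAlong_defCT] at this
      rw [derivAlong_W, derivAlong_W]
      linear_combination this
    refine Prod.ext (funext fun m => ?_) (Prod.ext (funext fun m => ?_) (funext fun m => ?_))
    · show ((∑ l, (derivAlong (eFrame a j) (ω i l) u
          - derivAlong (eFrame a i) (ω j l) u) • eBarFrame a l u)
          + bracket _ _ u).1 m = (0 : ℂ)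
      rw [Prod.fst_add, Pi.add_apply, sumEbar_fst, bracket_W_fst]
      linear_combination hfc m
    · show ((∑ l, (derivAlong (eFrame a j) (ω i l) u
          - derivAlong (eFrame a i) (ω j l) u) • eBarFrame a l u)
          + bracket _ _ u).2.1 m = (0 : ℂ)
      rw [Prod.snd_add, Prod.fst_add, Pi.add_apply, sumEbar_snd, bracket_W_snd, add_zero]
    · show ((∑ l, (derivAlong (eFrame a j) (ω i l) u
          - derivAlong (eFrame a i) (ω j l) u) • eBarFrame a l u)
          + bracket _ _ u).2.2 m = (0 : ℂ)
      rw [Prod.snd_add, Prod.snd_add, Pi.add_apply, sumEbar_trd, bracket_W_trd,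
        derivAlong_W_trd i j m u (fun l => hωd j l u hu) (fun l => had l m u hu),
        derivAlong_W_trd j i m u (fun l => hωd i l u hu) (fun l => had l m u hu)]
      exact aux_alg (fun k => ω i k u) (fun k => ω j k u)
        (fun l => derivAlong (eFrame a j) (ω i l) u - derivAlong (eFrame a i) (ω j l) u)
        (fun l => derivAlong (fun v => ∑ l', ω i l' v • eBarFrame a l' v) (ω j l) u)
        (fun l => derivAlong (fun v => ∑ l', ω j l' v • eBarFrame a l' v) (ω i l) u)
        (fun l => conj (a l m u))
        (fun k l => conj (derivAlong (eFrame a k) (a l m) u))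
        (fun k l => congrArg _ (hee_symm hee k l m hu))
        hfc
  · rintro ⟨h63, h62⟩
    rintro (i | k) (j | k') u hu
    · -- defCT / defCT
      refine (mem_span_iff (a := a) (ω := ω) u _).2 fun m => ?_
      simp only [Sum.elim_inl, bracket_defCT_defCT_fst, bracket_defCT_defCT_snd,
        zero_mul, Finset.sum_const_zero, add_zero]
      have h1 := congrFun (congrArg (fun w => w.1) (h62 i j u hu)) m
      simp only [Prod.fst_add, Pi.add_apply, Prod.fst_zero, Pi.zero_apply] at h1
      rw [sumEbar_fst, bracket_W_fst] at h1
      rw [derivAlong_defCT, derivAlong_defCT, derivAlong_W, derivAlong_W] at *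
      linear_combination h1
    · -- defCT / dt
      refine (mem_span_iff (a := a) (ω := ω) u _).2 fun m => ?_
      simp only [Sum.elim_inl, Sum.elim_inr, bracket_defCT_dt_fst, bracket_defCT_dt_snd,
        zero_mul, Finset.sum_const_zero, add_zero]
      exact h63 i m k' u hu
    · -- dt / defCT
      refine (mem_span_iff (a := a) (ω := ω) u _).2 fun m => ?_
      simp only [Sum.elim_inl, Sum.elim_inr, bracket_dt_defCT_fst, bracket_dt_defCT_snd,
        zero_mul, Finset.sum_const_zero, add_zero]
      rw [h63 j m k u hu, neg_zero]
    · -- dt / dt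
      show bracket (dtField k) (dtField k') u ∈ _
      rw [bracket_dt_dt]
      exact Submodule.zero_mem _
end
end
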